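/- arXiv:1810.05039 — 2 statements merged into one kernel-verified Lean document; each statement's English description precedes it below -/
import Mathlib

section
/- The integral over ℝ of the density (2πσ²)^{−1/2}·exp(−x²/(2σ²))·[1 − 2 Re(A_w)(1 − E(x)) + |A_w|²(1 − E(x))²], where E(x) = exp((x² − (x−g)²)/(4σ²)), equals 1 − 2[Re(A_w) − |A_w|²](1 − exp(−g²/(8σ²))). -/
/-!
Write the integrand as the centred Gaussian density `p₀` times a quadratic polynomial in
`E(x) = exp ((x² - (x - g)²) / (4σ²))`. Completing the square,
`p₀ E = exp (-g² / (8σ²)) p_{g/2}` and `p₀ E² = p_g`, where `p_c` is the Gaussian density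
of mean `c` and variance `σ²`; each of these integrates to one.
-/

open MeasureTheory Real ProbabilityTheory
open scoped NNReal

section GaussianOverlap

variable (μ ν : ℝ) (v : ℝ≥0) (x : ℝ)

lemma gaussianPDFReal_mul_exp_half_shift :
    gaussianPDFReal μ v x * exp (((x - μ) ^ 2 - (x - ν) ^ 2) / (4 * v))
      = exp (-(μ - ν) ^ 2 / (8 * v)) * gaussianPDFReal ((μ + ν) / 2) v x := by
  rcases eq_or_ne v 0 with rfl | hv
  · simp [gaussianPDFReal_zero_var]
  simp only [gaussianPDFReal]
  rw [mul_assoc, ← exp_add, mul_left_comm, ← exp_add]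
  congr 2
  field_simp
  ring

lemma gaussianPDFReal_mul_exp_half_shift_sq :
    gaussianPDFReal μ v x * exp (((x - μ) ^ 2 - (x - ν) ^ 2) / (4 * v)) ^ 2
      = gaussianPDFReal ν v x := by
  rcases eq_or_ne v 0 with rfl | hv
  · simp [gaussianPDFReal_zero_var]
  simp only [gaussianPDFReal, mul_assoc, ← exp_nat_mul, ← exp_add]
  congr 3
  field_simp
  ring

end GaussianOverlap

lemma integral_gaussianPDFReal_mul_quadratic_exp (μ ν c₀ c₁ c₂ : ℝ) {v : ℝ≥0}
    (hv : v ≠ 0) :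
    ∫ x, gaussianPDFReal μ v x * (c₀ + c₁ * exp (((x - μ) ^ 2 - (x - ν) ^ 2) / (4 * v))
        + c₂ * exp (((x - μ) ^ 2 - (x - ν) ^ 2) / (4 * v)) ^ 2)
      = c₀ + c₁ * exp (-(μ - ν) ^ 2 / (8 * v)) + c₂ := by
  have h_expand : ∀ x, gaussianPDFReal μ v x
        * (c₀ + c₁ * exp (((x - μ) ^ 2 - (x - ν) ^ 2) / (4 * v))
          + c₂ * exp (((x - μ) ^ 2 - (x - ν) ^ 2) / (4 * v)) ^ 2)
      = c₀ * gaussianPDFReal μ v x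
        + c₁ * exp (-(μ - ν) ^ 2 / (8 * v)) * gaussianPDFReal ((μ + ν) / 2) v x
        + c₂ * gaussianPDFReal ν v x := by
    intro x
    rw [← gaussianPDFReal_mul_exp_half_shift_sq μ ν, mul_assoc _ (exp _),
      ← gaussianPDFReal_mul_exp_half_shift]
    ring
  simp_rw [h_expand]
  rw [integral_add, integral_add, integral_const_mul, integral_const_mul, integral_const_mul]
  · simp only [integral_gaussianPDFReal_eq_one _ hv, mul_one]
  all_goals fun_prop (disch := exact integrable_gaussianPDFReal _ _)

theorem position_density_integral (σ g : ℝ) (hσ : 0 < σ) (Aw : ℂ) :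
    ∫ x : ℝ, (2 * Real.pi * σ ^ 2) ^ (-(1 / 2 : ℝ))
        * Real.exp (-x ^ 2 / (2 * σ ^ 2))
        * (1 - 2 * Aw.re * (1 - Real.exp ((x ^ 2 - (x - g) ^ 2) / (4 * σ ^ 2)))
          + ‖Aw‖ ^ 2
            * (1 - Real.exp ((x ^ 2 - (x - g) ^ 2) / (4 * σ ^ 2))) ^ 2)
    = 1 - 2 * (Aw.re - ‖Aw‖ ^ 2)
          * (1 - Real.exp (-g ^ 2 / (8 * σ ^ 2))) := by
  set v : ℝ≥0 := (σ ^ 2).toNNReal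
  have hv : (v : ℝ) = σ ^ 2 := Real.coe_toNNReal _ (sq_nonneg σ)
  have hv0 : v ≠ 0 := by positivity
  have h_pdf : ∀ x, (2 * π * σ ^ 2) ^ (-(1 / 2 : ℝ)) * exp (-x ^ 2 / (2 * σ ^ 2))
      = gaussianPDFReal 0 v x := by
    intro x
    rw [gaussianPDFReal, hv, rpow_neg (by positivity), Real.sqrt_eq_rpow, sub_zero]
  have h := integral_gaussianPDFReal_mul_quadratic_exp 0 g
    (1 - 2 * Aw.re + ‖Aw‖ ^ 2) (2 * Aw.re - 2 * ‖Aw‖ ^ 2) (‖Aw‖ ^ 2) hv0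
  simp only [hv, sub_zero, zero_sub, neg_sq] at h
  simp_rw [h_pdf]
  convert h using 1
  · congr 1 with x
    ring
  · ring
end

section
/- The Wigner function W₂ attains negative values for suitable parameters: with σ = 1, φ = π/2, there exist g ∈ ℝ and (x, k) ∈ ℝ² such that W₂(x,k) < 0, where W₂(x,k) = (1/8π)e^{−2k²}[e^{−x²/2}(1 − cos φ) + 2e^{−(x−g)²/2}] − (1/4π)e^{−2k²}e^{−(2x−g)²/8}[cos(gk) − cos(gk+φ)]. -/
/-! At the midpoint `x = g / 2` and `k = 0` both Gaussian envelopes have shrunk to `e^{-g²/8}`,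
while the interference term keeps its full weight `1 - cos φ`; for large separation `g`
the negative interference term therefore dominates. -/

open Real

noncomputable def wignerW2 (φ g x k : ℝ) : ℝ :=
  1 / (8 * π) * exp (-2 * k ^ 2) * (exp (-x ^ 2 / 2) * (1 - cos φ) + 2 * exp (-(x - g) ^ 2 / 2))
    - 1 / (4 * π) * exp (-2 * k ^ 2) * exp (-(2 * x - g) ^ 2 / 8)
      * (cos (g * k) - cos (g * k + φ))

theorem wignerW2_midpoint_zero (φ g : ℝ) :
    wignerW2 φ g (g / 2) 0 = (exp (-g ^ 2 / 8) * (3 - cos φ) - 2 * (1 - cos φ)) / (8 * π) := by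
  have hx : -(g / 2) ^ 2 / 2 = -g ^ 2 / 8 := by ring
  have hxg : -(g / 2 - g) ^ 2 / 2 = -g ^ 2 / 8 := by ring
  have hmid : -(2 * (g / 2) - g) ^ 2 / 8 = 0 := by ring
  have hk : -2 * (0 : ℝ) ^ 2 = 0 := by ring
  simp only [wignerW2, hx, hxg, hmid, hk, mul_zero, zero_add, cos_zero, exp_zero, mul_one]
  field_simp
  ring

theorem wignerW2_midpoint_zero_neg {φ g : ℝ}
    (h : exp (-g ^ 2 / 8) * (3 - cos φ) < 2 * (1 - cos φ)) : wignerW2 φ g (g / 2) 0 < 0 := by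
  rw [wignerW2_midpoint_zero]
  exact div_neg_of_neg_of_pos (sub_neg.mpr h) (by positivity)

theorem wigner_W2_negative :
    ∃ (g x k : ℝ),
      (1 / (8 * Real.pi)) * Real.exp (-2 * k ^ 2)
          * (Real.exp (-x ^ 2 / 2) * (1 - Real.cos (Real.pi / 2))
            + 2 * Real.exp (-(x - g) ^ 2 / 2))
        - (1 / (4 * Real.pi)) * Real.exp (-2 * k ^ 2)
          * Real.exp (-(2 * x - g) ^ 2 / 8)
          * (Real.cos (g * k) - Real.cos (g * k + Real.pi / 2)) < 0 := by
  have hgauss : exp (-(10 : ℝ) ^ 2 / 8) < 2 / 3 := by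
    calc exp (-(10 : ℝ) ^ 2 / 8) < exp (-1) := exp_lt_exp.mpr (by norm_num)
      _ < 0.3678794412 := exp_neg_one_lt_d9
      _ < 2 / 3 := by norm_num
  refine ⟨10, 10 / 2, 0, wignerW2_midpoint_zero_neg ?_⟩
  rw [cos_pi_div_two]
  linarith
end
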